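/- Let T_1, ..., T_n be independent random variables, T_i having survival function exp(-ρ_i Λ_0(t)) with ρ_i > 0 and Λ_0 a fixed continuous strictly increasing cumulative hazard with Λ_0(0)=0 and Λ_0(∞)=∞. Then the probability that the ordering of T_1,...,T_n equals a given permutation σ (i.e., T_{σ(1)} < T_{σ(2)} < ... < T_{σ(n)}) is ∏_{k=1}^n ρ_{σ(k)} / (ρ_{σ(k)} + ρ_{σ(k+1)} + ... + ρ_{σ(n)}), which does not depend on Λ_0. -/

import Mathlib

/-!
Almost surely every `T i` is positive, and on `(0, ∞)` the map `Λ₀` is strictly increasing, so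
the `T i` are ordered exactly as the `Λ₀ (T i)`. These are independent exponential variables
with rates `ρ i`, and `Λ₀` has disappeared.

For independent exponentials `X₀, …, Xₙ₋₁` with rates `r` and `t ≥ 0`, the probability of
`t < X₀ < ⋯ < Xₙ₋₁` is `exp (-(∑ r) t) * ∏ₖ rₖ / ∑_{j ≥ k} rⱼ`, by induction on `n`:
conditionally on `X₀ = s > t` the other variables contribute `exp (-(∑_{j ≥ 1} rⱼ) s)` times
their partial likelihood, and integrating this against the density `r₀ e^{-r₀ s}` over `s > t`
gives the factor `r₀ / ∑ r`.
-/

open MeasureTheory ProbabilityTheory Real Set Filter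

lemma StrictMonoOn.strictMono_comp_iff {α β γ : Type*} [Preorder α] [LinearOrder β]
    [Preorder γ] {f : β → γ} {s : Set β} (hf : StrictMonoOn f s) {x : α → β}
    (hx : ∀ a, x a ∈ s) : StrictMono (fun a => f (x a)) ↔ StrictMono x :=
  ⟨fun h _ _ hab => (hf.lt_iff_lt (hx _) (hx _)).1 (h hab),
    fun h _ _ hab => hf (hx _) (hx _) (h hab)⟩

lemma Fin.strictMono_cons_and_lt_iff {α : Type*} [Preorder α] {n : ℕ} {s t : α}
    {y : Fin n → α} :
    (StrictMono (Fin.cons s y : Fin (n + 1) → α) ∧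
        ∀ i, t < (Fin.cons s y : Fin (n + 1) → α) i) ↔
      t < s ∧ StrictMono y ∧ ∀ j, s < y j := by
  simp only [Fin.strictMono_cons, Fin.forall_fin_succ, Fin.cons_zero, Fin.cons_succ]
  exact ⟨fun ⟨⟨hy, hmono⟩, hts, _⟩ => ⟨hts, hmono, hy⟩,
    fun ⟨hts, hmono, hy⟩ => ⟨⟨hy, hmono⟩, hts, fun j => hts.trans (hy j)⟩⟩

lemma prod_ofReal_div_sum_Ici_succ {n : ℕ} (r : Fin (n + 1) → ℝ) :
    ∏ k, ENNReal.ofReal (r k / ∑ j ∈ Finset.Ici k, r j) =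
      ENNReal.ofReal (r 0 / ∑ j, r j) *
        ∏ k : Fin n, ENNReal.ofReal (r k.succ / ∑ j ∈ Finset.Ici k, r j.succ) := by
  simp only [Fin.prod_univ_succ, ← Fin.map_succEmb_Ici, Finset.sum_map]
  simp

lemma measurableSet_setOf_strictMono_and_lt {ι β : Type*} [Countable ι] [Preorder ι]
    [LinearOrder β] [TopologicalSpace β] [OrderClosedTopology β] [SecondCountableTopology β]
    [MeasurableSpace β] [OpensMeasurableSpace β] (t : β) :
    MeasurableSet {x : ι → β | StrictMono x ∧ ∀ i, t < x i} := by
  simp only [StrictMono, ofPred_and, ofPred_forall]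
  exact .inter (.iInter fun i => .iInter fun j => .iInter fun _ =>
      measurableSet_lt (measurable_pi_apply i) (measurable_pi_apply j))
    (.iInter fun i => measurableSet_lt measurable_const (measurable_pi_apply i))

lemma MeasureTheory.Measure.ext_of_Ioi {α : Type*} [TopologicalSpace α]
    {_ : MeasurableSpace α} [SecondCountableTopology α] [LinearOrder α] [OrderTopology α]
    [BorelSpace α] (μ ν : Measure α) [IsProbabilityMeasure μ] [IsProbabilityMeasure ν]
    (h : ∀ a, μ (Ioi a) = ν (Ioi a)) : μ = ν :=
  ext_of_Iic μ ν fun a => by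
    rw [← compl_Ioi, prob_compl_eq_one_sub measurableSet_Ioi,
      prob_compl_eq_one_sub measurableSet_Ioi, h]

instance sigmaFinite_expMeasure (r : ℝ) : SigmaFinite (expMeasure r) :=
  SigmaFinite.withDensity_ofReal (exponentialPDFReal r)

lemma setLIntegral_Ioi_exp_expMeasure {a c t : ℝ} (ha : 0 < a) (hc : 0 ≤ c) (ht : 0 ≤ t) :
    ∫⁻ s in Ioi t, ENNReal.ofReal (exp (-(c * s))) ∂expMeasure a =
      ENNReal.ofReal (a / (a + c) * exp (-((a + c) * t))) := by
  have hdens : ∀ s ∈ Ioi t, exponentialPDF a s * ENNReal.ofReal (exp (-(c * s))) =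
      ENNReal.ofReal (a * exp (-(a + c) * s)) := fun s hs => by
    rw [exponentialPDF_of_nonneg (ht.trans hs.out.le), ← ENNReal.ofReal_mul (by positivity),
      mul_assoc, ← exp_add]
    ring_nf
  rw [show expMeasure a = volume.withDensity (exponentialPDF a) from rfl,
    restrict_withDensity measurableSet_Ioi,
    lintegral_withDensity_eq_lintegral_mul _
      (by exact (measurable_exponentialPDFReal a).ennreal_ofReal)
      (by fun_prop)]
  simp only [Pi.mul_apply]
  rw [setLIntegral_congr_fun measurableSet_Ioi hdens,
    ← ofReal_integral_eq_lintegral_ofReal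
      ((integrableOn_exp_mul_Ioi (by linarith) t).const_mul a)
      (.of_forall fun s => by positivity),
    integral_const_mul, integral_exp_mul_Ioi (by linarith)]
  congr 1
  field_simp

lemma expMeasure_Ioi {a t : ℝ} (ha : 0 < a) (ht : 0 ≤ t) :
    expMeasure a (Ioi t) = ENNReal.ofReal (exp (-(a * t))) := by
  simpa [ha.ne'] using setLIntegral_Ioi_exp_expMeasure ha le_rfl ht

lemma map_eq_expMeasure_of_measure_Ioi {ν : Measure ℝ} [IsProbabilityMeasure ν] {ρ : ℝ}
    (hρ : 0 < ρ) {Λ : ℝ → ℝ} (hcont : Continuous Λ) (hmono : StrictMonoOn Λ (Ici 0))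
    (h0 : Λ 0 = 0) (htop : Tendsto Λ atTop atTop)
    (hsurv : ∀ t, 0 ≤ t → ν (Ioi t) = ENNReal.ofReal (exp (-(ρ * Λ t)))) :
    ν.map Λ = expMeasure ρ := by
  have := isProbabilityMeasure_expMeasure hρ
  have := Measure.isProbabilityMeasure_map (μ := ν) hcont.aemeasurable
  have hν0 : ν (Ioi 0) = 1 := by simpa [h0] using hsurv 0 le_rfl
  have hpos : ∀ᵐ x ∂ν, 0 < x :=
    mem_ae_iff.2 ((prob_compl_eq_zero_iff measurableSet_Ioi).2 hν0)
  refine Measure.ext_of_Ioi _ _ fun a => ?_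
  rw [Measure.map_apply hcont.measurable measurableSet_Ioi]
  rcases lt_or_ge a 0 with ha | ha
  · have hΛpos : Ioi 0 ⊆ Λ ⁻¹' Ioi a := fun x hx =>
      ha.trans_le (h0 ▸ hmono self_mem_Ici (mem_Ici.2 hx.out.le) hx).le
    have hexp0 : expMeasure ρ (Ioi 0) = 1 := by simp [expMeasure_Ioi hρ le_rfl]
    rw [le_antisymm prob_le_one (hν0 ▸ measure_mono hΛpos),
      le_antisymm prob_le_one (hexp0 ▸ measure_mono (Ioi_subset_Ioi ha.le))]
  · obtain ⟨b, hb, rfl⟩ :=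
      intermediate_value_Ici hcont.continuousOn htop (by rwa [h0] : a ∈ Ici (Λ 0))
    have hpre : Λ ⁻¹' Ioi (Λ b) =ᵐ[ν] Ioi b :=
      hpos.mono fun x hx => propext (hmono.lt_iff_lt hb (le_of_lt hx))
    rw [measure_congr hpre, hsurv b hb, expMeasure_Ioi hρ ha]

lemma hasLaw_comp_expMeasure {Ω : Type*} [MeasurableSpace Ω] {μ : Measure Ω}
    [IsProbabilityMeasure μ] {X : Ω → ℝ} (hX : Measurable X) {ρ : ℝ} (hρ : 0 < ρ) {Λ : ℝ → ℝ}
    (hcont : Continuous Λ) (hmono : StrictMonoOn Λ (Ici 0)) (h0 : Λ 0 = 0)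
    (htop : Tendsto Λ atTop atTop)
    (hsurv : ∀ t, 0 ≤ t → μ {ω | t < X ω} = ENNReal.ofReal (exp (-(ρ * Λ t)))) :
    HasLaw (fun ω => Λ (X ω)) (expMeasure ρ) μ where
  aemeasurable := (hcont.measurable.comp hX).aemeasurable
  map_eq := by
    have := Measure.isProbabilityMeasure_map (μ := μ) hX.aemeasurable
    rw [show μ.map (fun ω => Λ (X ω)) = μ.map (Λ ∘ X) from rfl,
      ← Measure.map_map hcont.measurable hX]
    exact map_eq_expMeasure_of_measure_Ioi hρ hcont hmono h0 htop fun t ht => by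
      rw [Measure.map_apply hX measurableSet_Ioi]
      exact hsurv t ht

lemma pi_expMeasure_strictMono_and_gt {n : ℕ} {r : Fin n → ℝ} (hr : ∀ i, 0 < r i) {t : ℝ}
    (ht : 0 ≤ t) :
    Measure.pi (fun i => expMeasure (r i)) {x | StrictMono x ∧ ∀ i, t < x i} =
      ENNReal.ofReal (exp (-((∑ i, r i) * t))) *
        ∏ k, ENNReal.ofReal (r k / ∑ j ∈ Finset.Ici k, r j) := by
  induction n generalizing t with
  | zero => simp [Subsingleton.strictMono]
  | succ n ih =>
    set A := {p : ℝ × (Fin n → ℝ) | t < p.1 ∧ StrictMono p.2 ∧ ∀ j, p.1 < p.2 j}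
    have hcons : (MeasurableEquiv.piFinSuccAbove (fun _ => ℝ) 0).symm ⁻¹'
        {x | StrictMono x ∧ ∀ i, t < x i} = A := by
      rw [MeasurableEquiv.piFinSuccAbove_symm_apply, Fin.insertNthEquiv_zero]
      ext ⟨s, y⟩
      exact Fin.strictMono_cons_and_lt_iff
    have hA : MeasurableSet A := hcons ▸
      (MeasurableEquiv.measurableSet_preimage _).2 (measurableSet_setOf_strictMono_and_lt t)
    set ν := Measure.pi fun j : Fin n => expMeasure (r j.succ)
    have hsection : ∀ s, ν (Prod.mk s ⁻¹' A) =
        (Ioi t).indicator (fun s => ν {y | StrictMono y ∧ ∀ j, s < y j}) s := by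
      intro s
      by_cases hts : t < s <;> simp [A, hts]
    set c := ∑ j : Fin n, r j.succ
    have hc : 0 ≤ c := Finset.sum_nonneg fun j _ => (hr _).le
    have hr0 : 0 ≤ r 0 / (r 0 + c) := div_nonneg (hr 0).le (by linarith [hr 0])
    rw [← (measurePreserving_piFinSuccAbove (fun i => expMeasure (r i)) 0).symm
        |>.measure_preimage_equiv, hcons, Measure.prod_apply hA]
    simp only [Fin.succAbove_zero]
    rw [lintegral_congr hsection, lintegral_indicator measurableSet_Ioi,
      setLIntegral_congr_fun measurableSet_Ioi fun s hs =>
        ih (fun j => hr j.succ) (ht.trans hs.out.le),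
      lintegral_mul_const _ (by fun_prop), setLIntegral_Ioi_exp_expMeasure (hr 0) hc ht,
      prod_ofReal_div_sum_Ici_succ, Fin.sum_univ_succ, ENNReal.ofReal_mul hr0]
    ring

theorem rank_prob_eq_partial_likelihood_general
    {Ω : Type*} [MeasurableSpace Ω] (μ : Measure Ω) [IsProbabilityMeasure μ]
    (n : ℕ) (T : Fin n → Ω → ℝ) (ρ : Fin n → ℝ) (Λ₀ : ℝ → ℝ)
    (hρ : ∀ i, 0 < ρ i)
    (hΛcont : Continuous Λ₀) (hΛmono : StrictMonoOn Λ₀ (Set.Ici 0))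
    (hΛ0 : Λ₀ 0 = 0) (hΛtop : Filter.Tendsto Λ₀ Filter.atTop Filter.atTop)
    (hmeas : ∀ i, Measurable (T i))
    (hindep : iIndepFun T μ)
    (hsurv : ∀ i, ∀ t, 0 ≤ t →
      μ {ω | t < T i ω} = ENNReal.ofReal (Real.exp (-(ρ i * Λ₀ t))))
    (σ : Equiv.Perm (Fin n)) :
    μ {ω | StrictMono fun k => T (σ k) ω} =
      ∏ k : Fin n,
        ENNReal.ofReal (ρ (σ k) / ∑ j ∈ Finset.Ici k, ρ (σ j)) := by
  have hTpos : ∀ᵐ ω ∂μ, ∀ i, 0 < T i ω := ae_all_iff.2 fun i =>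
    mem_ae_iff.2 <| (prob_compl_eq_zero_iff (measurableSet_lt measurable_const (hmeas i))).2 <|
      by simpa [hΛ0] using hsurv i 0 le_rfl
  have hΛpos : ∀ x, 0 < x → 0 < Λ₀ x := fun x hx =>
    hΛ0 ▸ hΛmono self_mem_Ici (mem_Ici.2 hx.le) hx
  -- the positivity conjunct puts the event in the form of `pi_expMeasure_strictMono_and_gt`
  have hevent : {ω | StrictMono fun k => T (σ k) ω} =ᵐ[μ]
      {ω | StrictMono (fun k => Λ₀ (T (σ k) ω)) ∧ ∀ k, 0 < Λ₀ (T (σ k) ω)} :=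
    hTpos.mono fun ω hω => by
      have hcomp := hΛmono.strictMono_comp_iff fun k => mem_Ici.2 (hω (σ k)).le
      exact propext ⟨fun h => ⟨hcomp.2 h, fun k => hΛpos _ (hω (σ k))⟩, fun h => hcomp.1 h.1⟩
  have hlaw : HasLaw (fun ω k => Λ₀ (T (σ k) ω)) (Measure.pi fun k => expMeasure (ρ (σ k))) μ :=
    ((hindep.comp (fun _ => Λ₀) fun _ => hΛcont.measurable).precomp σ.injective).hasLaw_pi
      fun k => hasLaw_comp_expMeasure (hmeas (σ k)) (hρ (σ k)) hΛcont hΛmono hΛ0 hΛtop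
        (hsurv (σ k))
  calc μ {ω | StrictMono fun k => T (σ k) ω}
      = Measure.pi (fun k => expMeasure (ρ (σ k))) {x | StrictMono x ∧ ∀ k, 0 < x k} := by
        rw [measure_congr hevent, hlaw.measure_eq (measurableSet_setOf_strictMono_and_lt 0)]
    _ = _ := by simp [pi_expMeasure_strictMono_and_gt (fun k => hρ (σ k)) le_rfl]

/-- Kalbfleisch–Prentice, uncensored case: under the
proportional-hazards model, the probability that the failure times occur
in the order given by a permutation `σ` is the Cox partial likelihood
`∏ k, ρ (σ k) / ∑_{j ≥ k} ρ (σ j)`, independent of the baseline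
cumulative hazard `Λ₀`. -/
theorem rank_prob_eq_partial_likelihood
    {Ω : Type*} [MeasurableSpace Ω] (μ : Measure Ω) [IsProbabilityMeasure μ]
    (n : ℕ) (T : Fin n → Ω → ℝ) (ρ : Fin n → ℝ) (Λ₀ : ℝ → ℝ)
    (hρ : ∀ i, 0 < ρ i)
    (hΛcont : Continuous Λ₀) (hΛmono : StrictMonoOn Λ₀ (Set.Ici 0))
    (hΛ0 : Λ₀ 0 = 0) (hΛtop : Filter.Tendsto Λ₀ Filter.atTop Filter.atTop)
    (hmeas : ∀ i, Measurable (T i))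
    (hpos : ∀ i, ∀ ω, 0 < T i ω)
    (hindep : iIndepFun T μ)
    (hsurv : ∀ i, ∀ t, 0 ≤ t →
      μ {ω | t < T i ω} = ENNReal.ofReal (Real.exp (-(ρ i * Λ₀ t))))
    (σ : Equiv.Perm (Fin n)) :
    μ {ω | StrictMono fun k => T (σ k) ω} =
      ∏ k : Fin n,
        ENNReal.ofReal (ρ (σ k) / ∑ j ∈ Finset.Ici k, ρ (σ j)) :=
  rank_prob_eq_partial_likelihood_general μ n T ρ Λ₀ hρ hΛcont hΛmono hΛ0 hΛtop hmeas hindep hsurv σ
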